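/- arXiv:1303.6469 — 7 statements merged into one kernel-verified Lean document; each statement's English description precedes it below -/
import Mathlib

section
/- For any pair (μ₀, μ) of finite nonnegative Borel measures, with μ₀ supported in X and μ supported in X × U, satisfying the discounted Liouville equation, the support of μ₀ is contained in the maximum controlled invariant set: supp μ₀ ⊆ X_I. -/
open MeasureTheory

/-- The (topological) support of a Borel measure: the set of points all of whose
open neighborhoods have positive measure. -/
def msupport {α : Type*} [TopologicalSpace α] [MeasurableSpace α] (μ : Measure α) : Set α :=
  {x | ∀ s : Set α, IsOpen s → x ∈ s → 0 < μ s}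

/-- The maximum controlled invariant set of the discrete-time system
`x_{t+1} = f (x_t, u_t)` with state constraint set `X` and input constraint set `U`. -/
def mciD {n m : ℕ} (X : Set (EuclideanSpace ℝ (Fin n))) (U : Set (EuclideanSpace ℝ (Fin m)))
    (f : EuclideanSpace ℝ (Fin n) → EuclideanSpace ℝ (Fin m) → EuclideanSpace ℝ (Fin n)) :
    Set (EuclideanSpace ℝ (Fin n)) :=
  {x0 | ∃ (x : ℕ → EuclideanSpace ℝ (Fin n)) (u : ℕ → EuclideanSpace ℝ (Fin m)),
    x 0 = x0 ∧ (∀ t, x (t + 1) = f (x t) (u t)) ∧ (∀ t, x t ∈ X) ∧ (∀ t, u t ∈ U)}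

/-- The discrete-time discounted Liouville equation for the pair `(μ₀, μ)`. -/
def LiouvilleD {n m : ℕ}
    (f : EuclideanSpace ℝ (Fin n) → EuclideanSpace ℝ (Fin m) → EuclideanSpace ℝ (Fin n))
    (α : ℝ) (μ₀ : Measure (EuclideanSpace ℝ (Fin n)))
    (μ : Measure (EuclideanSpace ℝ (Fin n) × EuclideanSpace ℝ (Fin m))) : Prop :=
  ∀ v : EuclideanSpace ℝ (Fin n) → ℝ, Continuous v →
    ∫ p, v p.1 ∂μ = ∫ x, v x ∂μ₀ + α * ∫ p, v (f p.1 p.2) ∂μ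

/-! Let `viableSet X U f k` be the set of states admitting an admissible trajectory of length `k`;
these sets are compact and decreasing. Testing the Liouville equation against a continuous `v ≥ 0`
whose zero set is `viableSet X U f k`, the left side vanishes once `μ` is carried by that set, so
both nonnegative terms on the right vanish: `μ₀` is carried by it and `μ` by its preimage under
the dynamics. By induction `supp μ₀ ⊆ ⋂ k, viableSet X U f k`, and by Cantor's intersection theorem
in the compact `U` this intersection is controlled invariant, hence contained in the MCI set. -/

open Set

section Support

variable {α : Type*} [TopologicalSpace α] [MeasurableSpace α] {μ : Measure α} {s : Set α}

theorem msupport_subset_of_ae_mem (hs : IsClosed s) (h : ∀ᵐ x ∂μ, x ∈ s) : msupport μ ⊆ s := by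
  intro x hx
  by_contra hxs
  exact (hx sᶜ hs.isOpen_compl hxs).ne' (ae_iff.1 h)

theorem ae_mem_of_msupport_subset [SecondCountableTopology α] (h : msupport μ ⊆ s) :
    ∀ᵐ x ∂μ, x ∈ s := by
  have hnull : μ (msupport μ)ᶜ = 0 := measure_null_of_locally_null _ fun x hx => by
    obtain ⟨t, ht, hxt, hμt⟩ : ∃ t, IsOpen t ∧ x ∈ t ∧ μ t = 0 := by
      simpa using (show ¬∀ t : Set α, IsOpen t → x ∈ t → 0 < μ t from hx)
    exact ⟨t, mem_nhdsWithin_of_mem_nhds (ht.mem_nhds hxt), hμt⟩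
  exact measure_mono_null (compl_subset_compl.2 h) hnull

end Support

theorem ae_eq_zero_of_integral_eq_zero {α : Type*} [TopologicalSpace α] [MeasurableSpace α]
    [OpensMeasurableSpace α] {μ : Measure α} [IsFiniteMeasure μ] {w : α → ℝ} (hw : Continuous w)
    (hw0 : 0 ≤ w) {C : ℝ} (hwC : ∀ x, w x ≤ C) (h : ∫ x, w x ∂μ = 0) : w =ᵐ[μ] 0 := by
  refine (integral_eq_zero_iff_of_nonneg hw0 ?_).1 h
  refine .of_bound hw.aestronglyMeasurable C (ae_of_all _ fun x => ?_)
  rw [Real.norm_of_nonneg (hw0 x)]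
  exact hwC x

section Viability

variable {E F : Type*}

def viableSet (X : Set E) (U : Set F) (f : E → F → E) : ℕ → Set E
  | 0 => X
  | k + 1 => {x ∈ X | ∃ u ∈ U, f x u ∈ viableSet X U f k}

variable {X : Set E} {U : Set F} {f : E → F → E}

theorem viableSet_succ_subset : ∀ k, viableSet X U f (k + 1) ⊆ viableSet X U f k
  | 0 => fun _ hx => hx.1
  | k + 1 => fun _ ⟨hxX, u, hu, hfu⟩ => ⟨hxX, u, hu, viableSet_succ_subset k hfu⟩

theorem viableSet_succ_eq_image (k : ℕ) :
    viableSet X U f (k + 1) =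
      Prod.fst '' (X ×ˢ U ∩ Function.uncurry f ⁻¹' viableSet X U f k) := by
  ext x
  constructor
  · rintro ⟨hxX, u, hu, hfu⟩
    exact ⟨(x, u), ⟨⟨hxX, hu⟩, hfu⟩, rfl⟩
  · rintro ⟨⟨x, u⟩, ⟨⟨hxX, hu⟩, hfu⟩, rfl⟩
    exact ⟨hxX, u, hu, hfu⟩

variable [TopologicalSpace E] [TopologicalSpace F]

theorem isCompact_viableSet [T2Space E] (hX : IsCompact X) (hU : IsCompact U)
    (hf : Continuous (Function.uncurry f)) : ∀ k, IsCompact (viableSet X U f k)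
  | 0 => hX
  | k + 1 => by
    rw [viableSet_succ_eq_image]
    exact ((hX.prod hU).inter_right
      ((isCompact_viableSet hX hU hf k).isClosed.preimage hf)).image continuous_fst

theorem exists_mem_iInter_viableSet [T2Space E] [T2Space F] (hX : IsCompact X)
    (hU : IsCompact U) (hf : Continuous (Function.uncurry f)) {x : E}
    (hx : x ∈ ⋂ k, viableSet X U f k) : ∃ u ∈ U, f x u ∈ ⋂ k, viableSet X U f k := by
  let C : ℕ → Set F := fun k => U ∩ f x ⁻¹' viableSet X U f k
  have hfx : Continuous (f x) := hf.comp (Continuous.prodMk_right x)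
  have hC : ∀ k, IsClosed (C k) := fun k =>
    hU.isClosed.inter ((isCompact_viableSet hX hU hf k).isClosed.preimage hfx)
  have hCne : ∀ k, (C k).Nonempty := fun k => by
    obtain ⟨-, u, hu, hfu⟩ := mem_iInter.1 hx (k + 1)
    exact ⟨u, hu, hfu⟩
  obtain ⟨u, hu⟩ := IsCompact.nonempty_iInter_of_sequence_nonempty_isCompact_isClosed C
    (fun k => inter_subset_inter_right U (preimage_mono (viableSet_succ_subset k))) hCne
    (hU.of_isClosed_subset (hC 0) inter_subset_left) hC
  exact ⟨u, (mem_iInter.1 hu 0).1, mem_iInter.2 fun k => (mem_iInter.1 hu k).2⟩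

end Viability

section EuclideanSystem

variable {n m : ℕ} {X : Set (EuclideanSpace ℝ (Fin n))} {U : Set (EuclideanSpace ℝ (Fin m))}
  {f : EuclideanSpace ℝ (Fin n) → EuclideanSpace ℝ (Fin m) → EuclideanSpace ℝ (Fin n)} {α : ℝ}
  {μ₀ : Measure (EuclideanSpace ℝ (Fin n))}
  {μ : Measure (EuclideanSpace ℝ (Fin n) × EuclideanSpace ℝ (Fin m))}

theorem subset_mciD_of_invariant {S : Set (EuclideanSpace ℝ (Fin n))} (hSX : S ⊆ X)
    (hS : ∀ x ∈ S, ∃ u ∈ U, f x u ∈ S) : S ⊆ mciD X U f := by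
  choose! κ hκU hκS using hS
  have hmaps : MapsTo (fun x => f x (κ x)) S S := hκS
  intro x₀ hx₀
  exact ⟨fun t => (fun x => f x (κ x))^[t] x₀, fun t => κ ((fun x => f x (κ x))^[t] x₀), rfl,
    fun t => Function.iterate_succ_apply' _ _ _, fun t => hSX (hmaps.iterate t hx₀),
    fun t => hκU _ (hmaps.iterate t hx₀)⟩

theorem LiouvilleD.ae_mem_of_ae_fst_mem [IsFiniteMeasure μ₀] [IsFiniteMeasure μ]
    (hL : LiouvilleD f α μ₀ μ) (hα : 0 < α) (hf : Continuous (Function.uncurry f))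
    {K : Set (EuclideanSpace ℝ (Fin n))} (hK : IsClosed K) (h : ∀ᵐ p ∂μ, p.1 ∈ K) :
    (∀ᵐ x ∂μ₀, x ∈ K) ∧ ∀ᵐ p ∂μ, f p.1 p.2 ∈ K := by
  obtain ⟨v, rfl, hv⟩ := perfectlyNormalSpace_iff_forall_isClosed_preimage_zero.1 inferInstance K hK
  have hv0 : ∀ x, 0 ≤ v x := fun x => (hv x).1
  have hv1 : ∀ x, v x ≤ 1 := fun x => (hv x).2
  have hfst : ∫ p, v p.1 ∂μ = 0 := integral_eq_zero_of_ae h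
  have hsum := hL v v.continuous
  have hI₀ : 0 ≤ ∫ x, v x ∂μ₀ := integral_nonneg hv0
  have hI : 0 ≤ ∫ p, v (f p.1 p.2) ∂μ := integral_nonneg fun p => hv0 _
  exact ⟨ae_eq_zero_of_integral_eq_zero v.continuous hv0 hv1 (by nlinarith),
    ae_eq_zero_of_integral_eq_zero (v.continuous.comp hf) (fun p => hv0 _) (fun p => hv1 _)
      (by nlinarith)⟩

theorem LiouvilleD.ae_fst_mem_viableSet [IsFiniteMeasure μ₀] [IsFiniteMeasure μ]
    (hL : LiouvilleD f α μ₀ μ) (hα : 0 < α) (hX : IsCompact X) (hU : IsCompact U)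
    (hf : Continuous (Function.uncurry f)) (hXU : ∀ᵐ p ∂μ, p ∈ X ×ˢ U) :
    ∀ k, ∀ᵐ p ∂μ, p.1 ∈ viableSet X U f k
  | 0 => hXU.mono fun _ hp => hp.1
  | k + 1 => by
    have hnext := (hL.ae_mem_of_ae_fst_mem hα hf (isCompact_viableSet hX hU hf k).isClosed
      (hL.ae_fst_mem_viableSet hα hX hU hf hXU k)).2
    filter_upwards [hXU, hnext] with p hp hfp using ⟨hp.1, p.2, hp.2, hfp⟩

end EuclideanSystem

theorem support_of_initial_measure_subset_MCI_general {n m : ℕ}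
    (X : Set (EuclideanSpace ℝ (Fin n))) (U : Set (EuclideanSpace ℝ (Fin m)))
    (hX : IsCompact X) (hU : IsCompact U)
    (f : EuclideanSpace ℝ (Fin n) → EuclideanSpace ℝ (Fin m) → EuclideanSpace ℝ (Fin n))
    (hf : Continuous fun p : EuclideanSpace ℝ (Fin n) × EuclideanSpace ℝ (Fin m) => f p.1 p.2)
    (α : ℝ) (hα0 : 0 < α)
    (μ₀ : Measure (EuclideanSpace ℝ (Fin n)))
    (μ : Measure (EuclideanSpace ℝ (Fin n) × EuclideanSpace ℝ (Fin m)))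
    [IsFiniteMeasure μ₀] [IsFiniteMeasure μ]
    (hsupp : msupport μ ⊆ X ×ˢ U)
    (hLiouville : LiouvilleD f α μ₀ μ) :
    msupport μ₀ ⊆ mciD X U f := by
  have hμ := hLiouville.ae_fst_mem_viableSet hα0 hX hU hf (ae_mem_of_msupport_subset hsupp)
  have hμ₀ : ∀ k, msupport μ₀ ⊆ viableSet X U f k := fun k =>
    have hK := (isCompact_viableSet hX hU hf k).isClosed
    msupport_subset_of_ae_mem hK (hLiouville.ae_mem_of_ae_fst_mem hα0 hf hK (hμ k)).1
  exact (subset_iInter hμ₀).trans <| subset_mciD_of_invariant (iInter_subset _ 0)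
    fun _ hx => exists_mem_iInter_viableSet hX hU hf hx

theorem support_of_initial_measure_subset_MCI {n m : ℕ}
    (X : Set (EuclideanSpace ℝ (Fin n))) (U : Set (EuclideanSpace ℝ (Fin m)))
    (hX : IsCompact X) (hU : IsCompact U)
    (f : EuclideanSpace ℝ (Fin n) → EuclideanSpace ℝ (Fin m) → EuclideanSpace ℝ (Fin n))
    (hf : Continuous fun p : EuclideanSpace ℝ (Fin n) × EuclideanSpace ℝ (Fin m) => f p.1 p.2)
    (α : ℝ) (hα0 : 0 < α) (hα1 : α < 1)
    (μ₀ : Measure (EuclideanSpace ℝ (Fin n)))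
    (μ : Measure (EuclideanSpace ℝ (Fin n) × EuclideanSpace ℝ (Fin m)))
    [IsFiniteMeasure μ₀] [IsFiniteMeasure μ]
    (hsupp₀ : msupport μ₀ ⊆ X) (hsupp : msupport μ ⊆ X ×ˢ U)
    (hLiouville : LiouvilleD f α μ₀ μ) :
    msupport μ₀ ⊆ mciD X U f :=
  support_of_initial_measure_subset_MCI_general X U hX hU f hf α hα0 μ₀ μ hsupp hLiouville
end

section
/- Any pair (v, w) feasible for the discrete-time dual LP satisfies v(x) ≥ 0 and w(x) ≥ 1 for every x in the maximum controlled invariant set X_I. -/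
/-!
Along an admissible trajectory the dual inequality iterates to `α ^ t v(x_t) ≤ v(x_0)`. The
trajectory stays in the compact set `X`, on which `v` is bounded below, so letting `t → ∞` gives
`v(x_0) ≥ 0`, and then `w(x_0) ≥ v(x_0) + 1 ≥ 1`.
-/

open MeasureTheory

/-- Feasibility of a pair of continuous functions `(v, w)` for the discrete-time dual LP:
`α v(f(x,u)) ≤ v(x)` on `X × U`, `w ≥ v + 1` on `X` and `w ≥ 0` on `X`. -/
def DualFeasD {n m : ℕ} (X : Set (EuclideanSpace ℝ (Fin n)))
    (U : Set (EuclideanSpace ℝ (Fin m)))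
    (f : EuclideanSpace ℝ (Fin n) → EuclideanSpace ℝ (Fin m) → EuclideanSpace ℝ (Fin n))
    (α : ℝ) (v w : EuclideanSpace ℝ (Fin n) → ℝ) : Prop :=
  Continuous v ∧ Continuous w ∧
  (∀ x ∈ X, ∀ u ∈ U, α * v (f x u) ≤ v x) ∧
  (∀ x ∈ X, v x + 1 ≤ w x) ∧
  (∀ x ∈ X, 0 ≤ w x)

theorem pow_mul_le_of_mul_succ_le {R : Type*} [Semiring R] [PartialOrder R] [IsOrderedRing R]
    {α : R} {a : ℕ → R} (hα : 0 ≤ α) (h : ∀ t, α * a (t + 1) ≤ a t) (t : ℕ) :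
    α ^ t * a t ≤ a 0 := by
  induction t with
  | zero => simp
  | succ t ih =>
    calc α ^ (t + 1) * a (t + 1) = α ^ t * (α * a (t + 1)) := by rw [pow_succ, mul_assoc]
      _ ≤ α ^ t * a t := mul_le_mul_of_nonneg_left (h t) (pow_nonneg hα t)
      _ ≤ a 0 := ih

theorem nonneg_of_mul_succ_le_of_bddBelow {α : ℝ} {a : ℕ → ℝ} (hα0 : 0 ≤ α) (hα1 : α < 1)
    (hbdd : BddBelow (Set.range a)) (h : ∀ t, α * a (t + 1) ≤ a t) : 0 ≤ a 0 := by
  obtain ⟨M, hM⟩ := hbdd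
  have hlow : ∀ t, α ^ t * M ≤ a 0 := fun t =>
    (mul_le_mul_of_nonneg_left (hM ⟨t, rfl⟩) (pow_nonneg hα0 t)).trans
      (pow_mul_le_of_mul_succ_le hα0 h t)
  have htend : Filter.Tendsto (fun t : ℕ => α ^ t * M) Filter.atTop (nhds 0) := by
    simpa using (tendsto_pow_atTop_nhds_zero_of_lt_one hα0 hα1).mul_const M
  exact le_of_tendsto' htend hlow

theorem discrete_dual_feasible_nonneg_on_MCI_general {n m : ℕ}
    (X : Set (EuclideanSpace ℝ (Fin n))) (U : Set (EuclideanSpace ℝ (Fin m)))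
    (hX : IsCompact X)
    (f : EuclideanSpace ℝ (Fin n) → EuclideanSpace ℝ (Fin m) → EuclideanSpace ℝ (Fin n))
    (α : ℝ) (hα0 : 0 < α) (hα1 : α < 1)
    (v w : EuclideanSpace ℝ (Fin n) → ℝ)
    (hfeas : DualFeasD X U f α v w) :
    ∀ x ∈ mciD X U f, 0 ≤ v x ∧ 1 ≤ w x := by
  obtain ⟨hv, -, hdecr, hvw, -⟩ := hfeas
  rintro _ ⟨x, u, rfl, hdyn, hxX, huU⟩
  have hstep : ∀ t, α * (v ∘ x) (t + 1) ≤ (v ∘ x) t := fun t => by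
    simpa only [Function.comp_apply, hdyn t] using hdecr _ (hxX t) _ (huU t)
  have hbdd : BddBelow (Set.range (v ∘ x)) :=
    (hX.bddBelow_image hv.continuousOn).mono
      (Set.range_subset_iff.2 fun t => Set.mem_image_of_mem v (hxX t))
  have hv0 : 0 ≤ v (x 0) := nonneg_of_mul_succ_le_of_bddBelow hα0.le hα1 hbdd hstep
  exact ⟨hv0, by linarith [hvw _ (hxX 0)]⟩

theorem discrete_dual_feasible_nonneg_on_MCI {n m : ℕ}
    (X : Set (EuclideanSpace ℝ (Fin n))) (U : Set (EuclideanSpace ℝ (Fin m)))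
    (hX : IsCompact X) (hU : IsCompact U)
    (f : EuclideanSpace ℝ (Fin n) → EuclideanSpace ℝ (Fin m) → EuclideanSpace ℝ (Fin n))
    (hf : Continuous fun p : EuclideanSpace ℝ (Fin n) × EuclideanSpace ℝ (Fin m) => f p.1 p.2)
    (α : ℝ) (hα0 : 0 < α) (hα1 : α < 1)
    (v w : EuclideanSpace ℝ (Fin n) → ℝ)
    (hfeas : DualFeasD X U f α v w) :
    ∀ x ∈ mciD X U f, 0 ≤ v x ∧ 1 ≤ w x :=
  discrete_dual_feasible_nonneg_on_MCI_general X U hX f α hα0 hα1 v w hfeas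
end

section
/- Any pair (v, w) feasible for the continuous-time dual LP satisfies v(x) ≥ 0 and w(x) ≥ 1 for every x in the maximum controlled invariant set X_I. -/
open MeasureTheory

/-- An admissible trajectory of the convexified inclusion
`ẋ(t) ∈ conv f(x(t), U)`, `x(t) ∈ X`, on `[0, ∞)`. -/
def IsAdmissible {n m : ℕ} (X : Set (EuclideanSpace ℝ (Fin n)))
    (U : Set (EuclideanSpace ℝ (Fin m)))
    (f : EuclideanSpace ℝ (Fin n) → EuclideanSpace ℝ (Fin m) → EuclideanSpace ℝ (Fin n))
    (x : ℝ → EuclideanSpace ℝ (Fin n)) : Prop :=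
  (∀ t, 0 ≤ t → x t ∈ X) ∧
  ∃ d : ℝ → EuclideanSpace ℝ (Fin n),
    (∀ t, 0 ≤ t → IntervalIntegrable d volume 0 t) ∧
    (∀ t, 0 ≤ t → x t = x 0 + ∫ s in (0:ℝ)..t, d s) ∧
    (∀ᵐ t ∂(volume.restrict (Set.Ici (0:ℝ))), d t ∈ convexHull ℝ ((f (x t)) '' U))

/-- The maximum controlled invariant set of the continuous-time relaxed system. -/
def mciC {n m : ℕ} (X : Set (EuclideanSpace ℝ (Fin n))) (U : Set (EuclideanSpace ℝ (Fin m)))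
    (f : EuclideanSpace ℝ (Fin n) → EuclideanSpace ℝ (Fin m) → EuclideanSpace ℝ (Fin n)) :
    Set (EuclideanSpace ℝ (Fin n)) :=
  {x0 | ∃ x : ℝ → EuclideanSpace ℝ (Fin n), IsAdmissible X U f x ∧ x 0 = x0}

/-- Feasibility of a pair `(v, w)` (with `v` continuously differentiable and `w` continuous)
for the continuous-time dual LP: `∇v(x)·f(x,u) ≤ β v(x)` on `X × U`, `w ≥ v + 1` on `X`
and `w ≥ 0` on `X`. -/
def DualFeasC {n m : ℕ} (X : Set (EuclideanSpace ℝ (Fin n)))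
    (U : Set (EuclideanSpace ℝ (Fin m)))
    (f : EuclideanSpace ℝ (Fin n) → EuclideanSpace ℝ (Fin m) → EuclideanSpace ℝ (Fin n))
    (β : ℝ) (v w : EuclideanSpace ℝ (Fin n) → ℝ) : Prop :=
  ContDiff ℝ 1 v ∧ Continuous w ∧
  (∀ x ∈ X, ∀ u ∈ U, fderiv ℝ v x (f x u) ≤ β * v x) ∧
  (∀ x ∈ X, v x + 1 ≤ w x) ∧
  (∀ x ∈ X, 0 ≤ w x)

/-! Along an admissible trajectory `x`, the function `τ ↦ exp (-βτ) v(x τ)` is absolutely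
continuous: the velocity is bounded, so `x` is Lipschitz, and `v` is Lipschitz on the compact `X`.
At almost every time its derivative is `exp (-βτ) (∇v(x)·ẋ - β v(x)) ≤ 0`, because the linear
inequality `∇v(x)·f(x,u) ≤ β v(x)` passes to `ẋ ∈ conv f(x, U)`. Hence
`exp (-βt) v(x t) ≤ v(x 0)` for all `t ≥ 0`; since `v` is bounded below on `X` and `β > 0`,
letting `t → ∞` gives `v(x 0) ≥ 0`, and then `w ≥ v + 1 ≥ 1`. -/

open Set Filter Topology Real
open scoped NNReal

theorem AbsolutelyContinuousOnInterval.le_of_ae_deriv_nonpos {g : ℝ → ℝ} {a b : ℝ}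
    (hg : AbsolutelyContinuousOnInterval g a b) (hab : a ≤ b)
    (hg' : ∀ᵐ τ, τ ∈ Ioo a b → deriv g τ ≤ 0) : g b ≤ g a := by
  have hint : ∫ τ in a..b, deriv g τ ≤ 0 := by
    rw [intervalIntegral.integral_of_le hab, integral_Ioc_eq_integral_Ioo]
    exact integral_nonpos_of_ae ((ae_restrict_iff' measurableSet_Ioo).2 hg')
  linarith [hg.integral_deriv_eq_sub]

theorem nonneg_of_forall_exp_neg_mul_le {β c M : ℝ} {g : ℝ → ℝ} (hβ : 0 < β)
    (hg : ∀ t, 0 ≤ t → M ≤ g t) (h : ∀ t, 0 ≤ t → exp (-(β * t)) * g t ≤ c) : 0 ≤ c := by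
  have hlim : Tendsto (fun t => M * exp (-(β * t))) atTop (𝓝 0) := by
    simpa using (tendsto_exp_neg_atTop_nhds_zero.comp
      (tendsto_id.const_mul_atTop hβ)).const_mul M
  refine le_of_tendsto hlim (eventually_atTop.2 ⟨0, fun t ht => ?_⟩)
  calc M * exp (-(β * t)) = exp (-(β * t)) * M := mul_comm _ _
    _ ≤ exp (-(β * t)) * g t := by gcongr; exact hg t ht
    _ ≤ c := h t ht

section Trajectory

variable {E : Type*} [NormedAddCommGroup E] [NormedSpace ℝ E] {x d : ℝ → E}

theorem lipschitzOnWith_of_eq_integral {R : ℝ≥0}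
    (hd : ∀ t, 0 ≤ t → IntervalIntegrable d volume 0 t)
    (hx : ∀ t, 0 ≤ t → x t = x 0 + ∫ s in (0:ℝ)..t, d s)
    (hR : ∀ᵐ t ∂volume.restrict (Ici 0), ‖d t‖ ≤ R) : LipschitzOnWith R x (Ici 0) := by
  refine LipschitzOnWith.of_dist_le_mul fun a (ha : 0 ≤ a) b (hb : 0 ≤ b) => ?_
  have hba : x a - x b = ∫ s in b..a, d s := by
    rw [hx a ha, hx b hb, add_sub_add_left_eq_sub,
      intervalIntegral.integral_interval_sub_left (hd a ha) (hd b hb)]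
  rw [dist_eq_norm (x a) (x b), hba, Real.dist_eq]
  refine intervalIntegral.norm_integral_le_of_norm_le_const_ae ?_
  filter_upwards [(ae_restrict_iff' measurableSet_Ici).1 hR] with s hs hsab
  exact hs (le_trans (le_min hb ha) (uIoc_subset_uIcc hsab).1)

theorem ae_hasDerivAt_of_eq_integral [CompleteSpace E]
    (hd : ∀ t, 0 ≤ t → IntervalIntegrable d volume 0 t)
    (hx : ∀ t, 0 ≤ t → x t = x 0 + ∫ s in (0:ℝ)..t, d s) :
    ∀ᵐ τ, 0 < τ → HasDerivAt x (d τ) τ := by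
  have hLeb : ∀ N : ℕ, ∀ᵐ τ, τ ∈ uIcc 0 (N : ℝ) →
      HasDerivAt (fun t => ∫ s in (0:ℝ)..t, d s) (d τ) τ := fun N => by
    filter_upwards [(hd N N.cast_nonneg).ae_hasDerivAt_integral] with τ hτ hτN
    exact hτ hτN 0 left_mem_uIcc
  filter_upwards [ae_all_iff.2 hLeb] with τ hτ hτ0
  obtain ⟨N, hN⟩ := exists_nat_gt τ
  have hxτ : x =ᶠ[𝓝 τ] fun t => x 0 + ∫ s in (0:ℝ)..t, d s :=
    eventually_of_mem (Ioi_mem_nhds hτ0) fun t ht => hx t (le_of_lt ht)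
  have hτN : τ ∈ uIcc 0 (N : ℝ) := by
    rw [uIcc_of_le N.cast_nonneg]; exact ⟨hτ0.le, hN.le⟩
  exact ((hτ N hτN).const_add (x 0)).congr_of_eventuallyEq hxτ

end Trajectory

theorem exists_norm_le_of_mem_convexHull_image {E F G : Type*} [TopologicalSpace E]
    [TopologicalSpace F] [NormedAddCommGroup G] [NormedSpace ℝ G] {X : Set E} {U : Set F}
    {f : E → F → G} (hX : IsCompact X) (hU : IsCompact U)
    (hf : Continuous fun p : E × F => f p.1 p.2) :
    ∃ R : ℝ≥0, ∀ z ∈ X, ∀ y ∈ convexHull ℝ (f z '' U), ‖y‖ ≤ R := by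
  set K := (fun p : E × F => f p.1 p.2) '' (X ×ˢ U)
  have hK : Bornology.IsBounded (convexHull ℝ K) :=
    isBounded_convexHull.2 ((hX.prod hU).image hf).isBounded
  obtain ⟨R, hR0, hR⟩ := hK.exists_pos_norm_le
  refine ⟨⟨R, hR0.le⟩, fun z hz y hy => hR y (convexHull_mono ?_ hy)⟩
  rintro _ ⟨u, hu, rfl⟩
  exact ⟨(z, u), ⟨hz, hu⟩, rfl⟩

theorem le_of_mem_convexHull_of_forall_le {E : Type*} [AddCommGroup E] [Module ℝ E]
    {ℓ : E →ₗ[ℝ] ℝ} {S : Set E} {c : ℝ} (hS : ∀ z ∈ S, ℓ z ≤ c) {y : E}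
    (hy : y ∈ convexHull ℝ S) : ℓ y ≤ c :=
  convexHull_min hS (convex_halfSpace_le ℓ.isLinear c) hy

theorem hasDerivAt_exp_neg_mul_comp {E : Type*} [NormedAddCommGroup E]
    [NormedSpace ℝ E] {v : E → ℝ} {x : ℝ → E} {x' : E} {τ : ℝ} (β : ℝ)
    (hv : DifferentiableAt ℝ v (x τ)) (hx : HasDerivAt x x' τ) :
    HasDerivAt (fun τ => exp (-(β * τ)) * v (x τ))
      (exp (-(β * τ)) * (fderiv ℝ v (x τ) x' - β * v (x τ))) τ := by
  have hexp : HasDerivAt (fun τ : ℝ => exp (-(β * τ))) (-β * exp (-(β * τ))) τ := by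
    simpa [mul_comm] using ((hasDerivAt_id τ).const_mul β).neg.exp
  exact (hexp.mul (hv.hasFDerivAt.comp_hasDerivAt τ hx)).congr_deriv
    (by simp only [Function.comp_apply]; ring)

theorem IsAdmissible.exp_neg_mul_comp_le {n m : ℕ} {X : Set (EuclideanSpace ℝ (Fin n))}
    {U : Set (EuclideanSpace ℝ (Fin m))}
    {f : EuclideanSpace ℝ (Fin n) → EuclideanSpace ℝ (Fin m) → EuclideanSpace ℝ (Fin n)}
    {x : ℝ → EuclideanSpace ℝ (Fin n)} (hx : IsAdmissible X U f x) (hX : IsCompact X)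
    (hU : IsCompact U)
    (hf : Continuous fun p : EuclideanSpace ℝ (Fin n) × EuclideanSpace ℝ (Fin m) => f p.1 p.2)
    {β : ℝ} {v : EuclideanSpace ℝ (Fin n) → ℝ} (hv : ContDiff ℝ 1 v)
    (hvf : ∀ z ∈ X, ∀ u ∈ U, fderiv ℝ v z (f z u) ≤ β * v z) {t : ℝ} (ht : 0 ≤ t) :
    exp (-(β * t)) * v (x t) ≤ v (x 0) := by
  obtain ⟨hxX, d, hd, hxd, hdf⟩ := hx
  obtain ⟨R, hR⟩ := exists_norm_le_of_mem_convexHull_image hX hU hf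
  have hxlip : LipschitzOnWith R x (Ici 0) := by
    refine lipschitzOnWith_of_eq_integral hd hxd ?_
    filter_upwards [hdf, ae_restrict_mem measurableSet_Ici] with τ hτ hτ0
      using hR _ (hxX τ hτ0) _ hτ
  obtain ⟨K, hvlip⟩ := LocallyLipschitzOn.exists_lipschitzOnWith_of_compact hX
    hv.locallyLipschitz.locallyLipschitzOn
  have hexp : ContDiff ℝ 1 fun τ : ℝ => exp (-(β * τ)) := by fun_prop
  have hvx : LipschitzOnWith (K * R) (v ∘ x) (uIcc 0 t) := by
    rw [uIcc_of_le ht]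
    exact hvlip.comp (hxlip.mono Icc_subset_Ici_self) fun τ hτ => hxX τ hτ.1
  have hac : AbsolutelyContinuousOnInterval (fun τ => exp (-(β * τ)) * v (x τ)) 0 t :=
    hexp.contDiffOn.absolutelyContinuousOnInterval.fun_mul hvx.absolutelyContinuousOnInterval
  refine (hac.le_of_ae_deriv_nonpos ht ?_).trans_eq (by simp)
  filter_upwards [ae_hasDerivAt_of_eq_integral hd hxd,
    (ae_restrict_iff' measurableSet_Ici).1 hdf] with τ hxτ hdτ hτ
  have hτ0 : 0 ≤ τ := hτ.1.le
  have hvd : fderiv ℝ v (x τ) (d τ) ≤ β * v (x τ) :=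
    le_of_mem_convexHull_of_forall_le (ℓ := (fderiv ℝ v (x τ)).toLinearMap)
      (by rintro _ ⟨u, hu, rfl⟩; exact hvf _ (hxX τ hτ0) u hu) (hdτ hτ0)
  rw [(hasDerivAt_exp_neg_mul_comp β (hv.differentiable one_ne_zero (x τ)) (hxτ hτ.1)).deriv]
  exact mul_nonpos_of_nonneg_of_nonpos (exp_pos _).le (sub_nonpos.2 hvd)

theorem continuous_dual_feasible_nonneg_on_MCI {n m : ℕ}
    (X : Set (EuclideanSpace ℝ (Fin n))) (U : Set (EuclideanSpace ℝ (Fin m)))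
    (hX : IsCompact X) (hU : IsCompact U)
    (f : EuclideanSpace ℝ (Fin n) → EuclideanSpace ℝ (Fin m) → EuclideanSpace ℝ (Fin n))
    (hf : Continuous fun p : EuclideanSpace ℝ (Fin n) × EuclideanSpace ℝ (Fin m) => f p.1 p.2)
    (β : ℝ) (hβ : 0 < β)
    (v w : EuclideanSpace ℝ (Fin n) → ℝ)
    (hfeas : DualFeasC X U f β v w) :
    ∀ x ∈ mciC X U f, 0 ≤ v x ∧ 1 ≤ w x := by
  obtain ⟨hv, -, hvf, hvw, -⟩ := hfeas
  rintro _ ⟨x, hx, rfl⟩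
  obtain ⟨M, hM⟩ := hX.bddBelow_image hv.continuous.continuousOn
  have hv0 : 0 ≤ v (x 0) :=
    nonneg_of_forall_exp_neg_mul_le hβ (fun t ht => hM (mem_image_of_mem v (hx.1 t ht)))
      fun t ht => hx.exp_neg_mul_comp_le hX hU hf hv hvf ht
  exact ⟨hv0, by linarith [hvw _ (hx.1 0 le_rfl)]⟩
end

section
/- Let x₀ ∈ X and let (x_t)_{t≥0}, (u_t)_{t≥0} be sequences with x_0 = x₀, x_{t+1} = f(x_t, u_t), x_t ∈ X and u_t ∈ U for all t ≥ 0. Then the discounted occupation measure μ := Σ_{t=0}^∞ αᵗ δ_{(x_t, u_t)} is a finite nonnegative Borel measure supported in X × U with total mass μ(X × U) = 1/(1−α), and the pair (δ_{x₀}, μ) satisfies the discounted Liouville equation. -/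
open MeasureTheory
open scoped ENNReal

/-- The discounted occupation measure `μ = Σ_{t=0}^∞ αᵗ δ_{(x_t, u_t)}` of a state-control
trajectory. -/
noncomputable def discOccMeasure {n m : ℕ} (α : ℝ) (x : ℕ → EuclideanSpace ℝ (Fin n))
    (u : ℕ → EuclideanSpace ℝ (Fin m)) :
    Measure (EuclideanSpace ℝ (Fin n) × EuclideanSpace ℝ (Fin m)) :=
  Measure.sum fun t : ℕ => (ENNReal.ofReal (α ^ t)) • Measure.dirac (x t, u t)

/-!
The occupation measure is a weighted sum of Dirac masses along the trajectory, so integrating a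
function `g` against it gives the series `∑ αᵗ g(xₜ, uₜ)`, which converges absolutely because `g` is
bounded on the compact set visited by the trajectory. With `g(x, u) = v(x)` and `g = v ∘ f`, the
Liouville equation is the index shift `∑ αᵗ v(xₜ) = v(x₀) + α ∑ αᵗ v(xₜ₊₁)` combined with
`xₜ₊₁ = f(xₜ, uₜ)`.
-/

lemma msupport_subset_of_measure_compl_eq_zero {Ω : Type*} [TopologicalSpace Ω]
    [MeasurableSpace Ω] {μ : Measure Ω} {s : Set Ω} (hs : IsClosed s) (h : μ sᶜ = 0) :
    msupport μ ⊆ s := by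
  intro p hp
  by_contra hps
  exact (hp sᶜ hs.isOpen_compl hps).ne' h

lemma ENNReal.tsum_ofReal_geometric {α : ℝ} (hα0 : 0 ≤ α) (hα1 : α < 1) :
    ∑' t : ℕ, ENNReal.ofReal (α ^ t) = ENNReal.ofReal (1 / (1 - α)) := by
  rw [← ENNReal.ofReal_tsum_of_nonneg (pow_nonneg hα0) (summable_geometric_of_lt_one hα0 hα1),
    tsum_geometric_of_lt_one hα0 hα1, one_div]

section GeometricSeries

variable {E : Type*} [NormedAddCommGroup E] [NormedSpace ℝ E] {α : ℝ}

lemma summable_pow_smul_of_norm_le [CompleteSpace E] (hα0 : 0 ≤ α) (hα1 : α < 1) {a : ℕ → E}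
    {C : ℝ} (hC : ∀ t, ‖a t‖ ≤ C) : Summable fun t => α ^ t • a t := by
  refine Summable.of_norm_bounded ((summable_geometric_of_lt_one hα0 hα1).mul_right C) fun t => ?_
  rw [norm_smul, norm_pow, Real.norm_of_nonneg hα0]
  exact mul_le_mul_of_nonneg_left (hC t) (pow_nonneg hα0 t)

lemma tsum_pow_smul_eq_add_smul_tsum_succ {a : ℕ → E} (h : Summable fun t => α ^ t • a t) :
    ∑' t, α ^ t • a t = a 0 + α • ∑' t, α ^ t • a (t + 1) := by
  rw [h.tsum_eq_zero_add, ← tsum_const_smul'']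
  simp only [pow_zero, one_smul, pow_succ', mul_smul]

end GeometricSeries

section DiscountedDiracSum

variable {Ω : Type*} [MeasurableSpace Ω]

noncomputable def discountedDiracSum (α : ℝ) (z : ℕ → Ω) : Measure Ω :=
  Measure.sum fun t => ENNReal.ofReal (α ^ t) • Measure.dirac (z t)

variable {α : ℝ} {z : ℕ → Ω}

lemma discountedDiracSum_apply {s : Set Ω} (hs : MeasurableSet s) :
    discountedDiracSum α z s = ∑' t, ENNReal.ofReal (α ^ t) * s.indicator 1 (z t) := by
  simp [discountedDiracSum, Measure.sum_apply _ hs, Measure.dirac_apply' _ hs]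

lemma discountedDiracSum_apply_of_forall_mem (hα0 : 0 ≤ α) (hα1 : α < 1) {s : Set Ω}
    (hs : MeasurableSet s) (hz : ∀ t, z t ∈ s) :
    discountedDiracSum α z s = ENNReal.ofReal (1 / (1 - α)) := by
  simp only [discountedDiracSum_apply hs, Set.indicator_of_mem (hz _), Pi.one_apply, mul_one,
    ENNReal.tsum_ofReal_geometric hα0 hα1]

lemma discountedDiracSum_apply_of_forall_notMem {s : Set Ω} (hs : MeasurableSet s)
    (hz : ∀ t, z t ∉ s) : discountedDiracSum α z s = 0 := by
  simp [discountedDiracSum_apply hs, Set.indicator_of_notMem (hz _)]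

lemma isFiniteMeasure_discountedDiracSum (hα0 : 0 ≤ α) (hα1 : α < 1) :
    IsFiniteMeasure (discountedDiracSum α z) := by
  constructor
  rw [discountedDiracSum_apply_of_forall_mem hα0 hα1 MeasurableSet.univ fun _ => trivial]
  exact ENNReal.ofReal_lt_top

variable {E : Type*} [NormedAddCommGroup E] {g : Ω → E} {C : ℝ}

lemma integrable_discountedDiracSum (hα0 : 0 ≤ α) (hα1 : α < 1) (hg : StronglyMeasurable g)
    (hC : ∀ t, ‖g (z t)‖ ≤ C) : Integrable g (discountedDiracSum α z) := by
  have := isFiniteMeasure_discountedDiracSum (z := z) hα0 hα1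
  have hbound : MeasurableSet {p | ‖g p‖ ≤ C} :=
    measurableSet_le hg.norm.measurable measurable_const
  refine .of_bound hg.aestronglyMeasurable C ?_
  rw [discountedDiracSum, Measure.ae_sum_iff' hbound]
  exact fun t => Measure.ae_smul_measure ((ae_dirac_iff hbound).2 (hC t)) _

lemma integral_discountedDiracSum [NormedSpace ℝ E] [CompleteSpace E] (hα0 : 0 ≤ α)
    (hα1 : α < 1) (hg : StronglyMeasurable g) (hC : ∀ t, ‖g (z t)‖ ≤ C) :
    ∫ p, g p ∂discountedDiracSum α z = ∑' t, α ^ t • g (z t) := by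
  have hint := integrable_discountedDiracSum hα0 hα1 hg hC
  rw [discountedDiracSum] at hint ⊢
  simp only [integral_sum_measure hint, integral_smul_measure, integral_dirac' _ _ hg,
    ENNReal.toReal_ofReal (pow_nonneg hα0 _)]

end DiscountedDiracSum

lemma discOccMeasure_eq_discountedDiracSum {n m : ℕ} (α : ℝ)
    (x : ℕ → EuclideanSpace ℝ (Fin n)) (u : ℕ → EuclideanSpace ℝ (Fin m)) :
    discOccMeasure α x u = discountedDiracSum α fun t => (x t, u t) :=
  rfl

theorem discounted_occupation_measure_satisfies_Liouville_general {n m : ℕ}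
    (X : Set (EuclideanSpace ℝ (Fin n))) (U : Set (EuclideanSpace ℝ (Fin m)))
    (hX : IsCompact X) (hU : IsCompact U)
    (f : EuclideanSpace ℝ (Fin n) → EuclideanSpace ℝ (Fin m) → EuclideanSpace ℝ (Fin n))
    (hf : Continuous fun p : EuclideanSpace ℝ (Fin n) × EuclideanSpace ℝ (Fin m) => f p.1 p.2)
    (α : ℝ) (hα0 : 0 < α) (hα1 : α < 1)
    (x0 : EuclideanSpace ℝ (Fin n))
    (x : ℕ → EuclideanSpace ℝ (Fin n)) (u : ℕ → EuclideanSpace ℝ (Fin m))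
    (hinit : x 0 = x0) (hdyn : ∀ t, x (t + 1) = f (x t) (u t))
    (hxX : ∀ t, x t ∈ X) (huU : ∀ t, u t ∈ U) :
    IsFiniteMeasure (discOccMeasure α x u) ∧
    msupport (discOccMeasure α x u) ⊆ X ×ˢ U ∧
    discOccMeasure α x u (X ×ˢ U) = ENNReal.ofReal (1 / (1 - α)) ∧
    LiouvilleD f α (Measure.dirac x0) (discOccMeasure α x u) := by
  have hmem : ∀ t, (x t, u t) ∈ X ×ˢ U := fun t => ⟨hxX t, huU t⟩
  have hclosed : IsClosed (X ×ˢ U) := (hX.prod hU).isClosed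
  rw [discOccMeasure_eq_discountedDiracSum]
  refine ⟨isFiniteMeasure_discountedDiracSum hα0.le hα1,
    msupport_subset_of_measure_compl_eq_zero hclosed <|
      discountedDiracSum_apply_of_forall_notMem hclosed.measurableSet.compl
        fun t h => h (hmem t),
    discountedDiracSum_apply_of_forall_mem hα0.le hα1 hclosed.measurableSet hmem,
    fun v hv => ?_⟩
  obtain ⟨C, hC⟩ := hX.exists_bound_of_continuousOn hv.continuousOn
  have hvx : ∀ t, ‖v (x t)‖ ≤ C := fun t => hC _ (hxX t)
  have hvf : ∀ t, ‖v (f (x t) (u t))‖ ≤ C := fun t => hdyn t ▸ hvx (t + 1)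
  rw [integral_discountedDiracSum (z := fun t => (x t, u t)) (g := fun p => v p.1) hα0.le hα1
      (hv.comp continuous_fst).stronglyMeasurable hvx,
    integral_discountedDiracSum (z := fun t => (x t, u t)) (g := fun p => v (f p.1 p.2))
      hα0.le hα1 (hv.comp hf).stronglyMeasurable hvf,
    integral_dirac, ← hinit]
  simp only [← hdyn]
  exact tsum_pow_smul_eq_add_smul_tsum_succ (summable_pow_smul_of_norm_le hα0.le hα1 hvx)

theorem discounted_occupation_measure_satisfies_Liouville {n m : ℕ}
    (X : Set (EuclideanSpace ℝ (Fin n))) (U : Set (EuclideanSpace ℝ (Fin m)))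
    (hX : IsCompact X) (hU : IsCompact U)
    (f : EuclideanSpace ℝ (Fin n) → EuclideanSpace ℝ (Fin m) → EuclideanSpace ℝ (Fin n))
    (hf : Continuous fun p : EuclideanSpace ℝ (Fin n) × EuclideanSpace ℝ (Fin m) => f p.1 p.2)
    (α : ℝ) (hα0 : 0 < α) (hα1 : α < 1)
    (x0 : EuclideanSpace ℝ (Fin n)) (hx0 : x0 ∈ X)
    (x : ℕ → EuclideanSpace ℝ (Fin n)) (u : ℕ → EuclideanSpace ℝ (Fin m))
    (hinit : x 0 = x0) (hdyn : ∀ t, x (t + 1) = f (x t) (u t))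
    (hxX : ∀ t, x t ∈ X) (huU : ∀ t, u t ∈ U) :
    IsFiniteMeasure (discOccMeasure α x u) ∧
    msupport (discOccMeasure α x u) ⊆ X ×ˢ U ∧
    discOccMeasure α x u (X ×ˢ U) = ENNReal.ofReal (1 / (1 - α)) ∧
    LiouvilleD f α (Measure.dirac x0) (discOccMeasure α x u) :=
  discounted_occupation_measure_satisfies_Liouville_general X U hX hU f hf α hα0 hα1 x0 x u hinit
    hdyn hxX huU
end

section
/- Let (μ₀, μ) be finite nonnegative Borel measures, with μ₀ supported in X and μ supported in X × U, satisfying the discounted Liouville equation, and let μ̃ denote the x-marginal of μ, i.e. μ̃(A) := μ(A × ℝᵐ). Then supp μ₀ ⊆ supp μ̃, and for every x ∈ supp μ̃ there exists u ∈ U with f(x,u) ∈ supp μ̃; in particular supp μ̃ is a controlled invariant subset of X. -/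
open MeasureTheory

/-! Test the Liouville equation against a continuous `g ≥ 0` whose zero set is exactly
`supp μ̃`. The left-hand side `∫ g dμ̃` vanishes, so both nonnegative terms on the right vanish
(`α > 0`): `g` is zero on `supp μ₀`, and `g ∘ f` is zero on `supp μ`, i.e. `f` maps `supp μ` into
`supp μ̃`. Since `supp μ` is a closed subset of the compact `X × U`, its projection is closed and
carries `μ̃`, hence contains `supp μ̃`: each `x ∈ supp μ̃` comes with some `u ∈ U` such that
`(x, u) ∈ supp μ`. -/

open Set

namespace MeasureTheory.Measure

section Support

variable {X Y : Type*} [TopologicalSpace X] [MeasurableSpace X]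

theorem msupport_eq_support (μ : Measure X) : msupport μ = μ.support := by
  ext x
  simp only [msupport, support_eq_forall_isOpen, mem_ofPred_eq]
  exact forall_congr' fun _ => imp.swap

theorem eqOn_zero_support_of_integral_eq_zero {μ : Measure X}
    {g : X → ℝ} (hg : Continuous g) (hg0 : 0 ≤ g) (hgi : Integrable g μ)
    (h : ∫ x, g x ∂μ = 0) : EqOn g 0 μ.support := by
  have hnull : μ (Function.support g) = 0 := (integral_eq_zero_iff_of_nonneg hg0 hgi).1 h
  intro x hx
  by_contra hgx
  exact subset_compl_support_of_isOpen hg.isOpen_support hnull hgx hx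

theorem integral_eq_zero_of_eqOn_zero_support [HereditarilyLindelofSpace X] {μ : Measure X}
    {g : X → ℝ} (h : EqOn g 0 μ.support) : ∫ x, g x ∂μ = 0 :=
  integral_eq_zero_of_ae (Filter.mem_of_superset support_mem_ae h)

theorem support_map_subset_closure_image [HereditarilyLindelofSpace X]
    [TopologicalSpace Y] [MeasurableSpace Y] [OpensMeasurableSpace Y]
    {μ : Measure X} {φ : X → Y} (hφ : AEMeasurable φ μ) :
    (μ.map φ).support ⊆ closure (φ '' μ.support) := by
  refine support_subset_of_isClosed isClosed_closure ?_
  refine (ae_map_iff hφ (p := (· ∈ closure (φ '' μ.support)))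
    isClosed_closure.measurableSet).2 ?_
  filter_upwards [support_mem_ae] with x hx using subset_closure (mem_image_of_mem φ hx)

theorem support_map_subset_image_of_isCompact [HereditarilyLindelofSpace X]
    [OpensMeasurableSpace X] [TopologicalSpace Y] [T2Space Y] [MeasurableSpace Y] [BorelSpace Y]
    {μ : Measure X} (hμ : IsCompact μ.support) {φ : X → Y} (hφ : Continuous φ) : (μ.map φ).support ⊆ φ '' μ.support :=
  (hμ.image hφ).isClosed.closure_eq ▸ support_map_subset_closure_image hφ.aemeasurable

end Support

end MeasureTheory.Measure

section Liouville

variable {n m : ℕ}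
  {f : EuclideanSpace ℝ (Fin n) → EuclideanSpace ℝ (Fin m) → EuclideanSpace ℝ (Fin n)} {α : ℝ}
  {μ₀ : Measure (EuclideanSpace ℝ (Fin n))}
  {μ : Measure (EuclideanSpace ℝ (Fin n) × EuclideanSpace ℝ (Fin m))}
  [IsFiniteMeasure μ₀] [IsFiniteMeasure μ]

theorem LiouvilleD.eqOn_zero_of_eqOn_zero_support_map_fst (hL : LiouvilleD f α μ₀ μ)
    (hα : 0 < α) (hf : Continuous fun p : EuclideanSpace ℝ (Fin n) × EuclideanSpace ℝ (Fin m) =>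
      f p.1 p.2)
    {g : EuclideanSpace ℝ (Fin n) → ℝ} (hg : Continuous g) (hg01 : ∀ x, g x ∈ Icc 0 1)
    (hgν : EqOn g 0 (μ.map Prod.fst).support) :
    EqOn g 0 μ₀.support ∧ EqOn (fun p => g (f p.1 p.2)) 0 μ.support := by
  have hg0 : 0 ≤ g := fun x => (hg01 x).1
  have hgC : ∀ x, ‖g x‖ ≤ 1 := fun x => by
    rw [Real.norm_of_nonneg (hg01 x).1]; exact (hg01 x).2
  have hmarginal : ∫ p, g p.1 ∂μ = 0 := by
    rw [← integral_map measurable_fst.aemeasurable hg.aestronglyMeasurable]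
    exact Measure.integral_eq_zero_of_eqOn_zero_support hgν
  have hsplit := hL g hg
  have hint₀ : 0 ≤ ∫ x, g x ∂μ₀ := integral_nonneg hg0
  have hint₁ : 0 ≤ ∫ p, g (f p.1 p.2) ∂μ := integral_nonneg fun p => hg0 _
  constructor
  · refine Measure.eqOn_zero_support_of_integral_eq_zero hg hg0
      (.of_bound hg.aestronglyMeasurable 1 (ae_of_all _ hgC)) ?_
    nlinarith
  · refine Measure.eqOn_zero_support_of_integral_eq_zero (hg.comp hf) (fun p => hg0 _)
      (.of_bound (hg.comp hf).aestronglyMeasurable 1 (ae_of_all _ fun p => hgC _)) ?_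
    nlinarith

theorem LiouvilleD.support_subset_support_map_fst (hL : LiouvilleD f α μ₀ μ) (hα : 0 < α)
    (hf : Continuous fun p : EuclideanSpace ℝ (Fin n) × EuclideanSpace ℝ (Fin m) => f p.1 p.2) :
    μ₀.support ⊆ (μ.map Prod.fst).support ∧
      ∀ p ∈ μ.support, f p.1 p.2 ∈ (μ.map Prod.fst).support := by
  obtain ⟨g, hgν, hg01⟩ := perfectlyNormalSpace_iff_forall_isClosed_preimage_zero.1
    inferInstance _ (Measure.isClosed_support (μ := μ.map Prod.fst))
  rw [hgν]
  exact hL.eqOn_zero_of_eqOn_zero_support_map_fst hα hf g.continuous hg01 hgν.subset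

end Liouville

theorem support_of_marginal_controlled_invariant_general {n m : ℕ}
    (X : Set (EuclideanSpace ℝ (Fin n))) (U : Set (EuclideanSpace ℝ (Fin m)))
    (hX : IsCompact X) (hU : IsCompact U)
    (f : EuclideanSpace ℝ (Fin n) → EuclideanSpace ℝ (Fin m) → EuclideanSpace ℝ (Fin n))
    (hf : Continuous fun p : EuclideanSpace ℝ (Fin n) × EuclideanSpace ℝ (Fin m) => f p.1 p.2)
    (α : ℝ) (hα0 : 0 < α)
    (μ₀ : Measure (EuclideanSpace ℝ (Fin n)))
    (μ : Measure (EuclideanSpace ℝ (Fin n) × EuclideanSpace ℝ (Fin m)))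
    [IsFiniteMeasure μ₀] [IsFiniteMeasure μ]
    (hsupp : msupport μ ⊆ X ×ˢ U)
    (hLiouville : LiouvilleD f α μ₀ μ) :
    msupport μ₀ ⊆ msupport (μ.map Prod.fst) ∧
    msupport (μ.map Prod.fst) ⊆ X ∧
    ∀ x ∈ msupport (μ.map Prod.fst), ∃ u ∈ U, f x u ∈ msupport (μ.map Prod.fst) := by
  simp only [Measure.msupport_eq_support] at hsupp ⊢
  have hcompact : IsCompact μ.support :=
    (hX.prod hU).of_isClosed_subset Measure.isClosed_support hsupp
  have hmarginal := Measure.support_map_subset_image_of_isCompact hcompact continuous_fst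
  obtain ⟨hinitial, hinvariant⟩ := hLiouville.support_subset_support_map_fst hα0 hf
  refine ⟨hinitial, fun x hx => ?_, fun x hx => ?_⟩
  · obtain ⟨p, hp, rfl⟩ := hmarginal hx
    exact (hsupp hp).1
  · obtain ⟨⟨x, u⟩, hp, rfl⟩ := hmarginal hx
    exact ⟨u, (hsupp hp).2, hinvariant _ hp⟩

/-- If `(μ₀, μ)` satisfies the discounted Liouville equation then, writing `μ̃` for the
`x`-marginal of `μ`, we have `supp μ₀ ⊆ supp μ̃` and `supp μ̃` is a controlled invariant
subset of `X`: for every `x ∈ supp μ̃` there exists `u ∈ U` with `f(x,u) ∈ supp μ̃`. -/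
theorem support_of_marginal_controlled_invariant {n m : ℕ}
    (X : Set (EuclideanSpace ℝ (Fin n))) (U : Set (EuclideanSpace ℝ (Fin m)))
    (hX : IsCompact X) (hU : IsCompact U)
    (f : EuclideanSpace ℝ (Fin n) → EuclideanSpace ℝ (Fin m) → EuclideanSpace ℝ (Fin n))
    (hf : Continuous fun p : EuclideanSpace ℝ (Fin n) × EuclideanSpace ℝ (Fin m) => f p.1 p.2)
    (α : ℝ) (hα0 : 0 < α) (hα1 : α < 1)
    (μ₀ : Measure (EuclideanSpace ℝ (Fin n)))
    (μ : Measure (EuclideanSpace ℝ (Fin n) × EuclideanSpace ℝ (Fin m)))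
    [IsFiniteMeasure μ₀] [IsFiniteMeasure μ]
    (hsupp₀ : msupport μ₀ ⊆ X) (hsupp : msupport μ ⊆ X ×ˢ U)
    (hLiouville : LiouvilleD f α μ₀ μ) :
    msupport μ₀ ⊆ msupport (μ.map Prod.fst) ∧
    msupport (μ.map Prod.fst) ⊆ X ∧
    ∀ x ∈ msupport (μ.map Prod.fst), ∃ u ∈ U, f x u ∈ msupport (μ.map Prod.fst) :=
  support_of_marginal_controlled_invariant_general X U hX hU f hf α hα0 μ₀ μ hsupp hLiouville
end

section
/- Let X ⊆ ℝⁿ be compact with Lebesgue measure λ, and S ⊆ X a Lebesgue measurable set. Suppose (w_k)_{k≥1} are Borel measurable functions on X with w_k ≥ 0 on X, w_k ≥ 1 on S, and ∫_X w_k dλ → λ(S). Then w_k converges to the indicator function 1_S in L¹(X, λ), i.e. ∫_X |w_k − 1_S| dλ → 0, and the running minima w̄_k := min_{1≤i≤k} w_i converge to 1_S almost uniformly on X: for every ε > 0 there is a measurable A ⊆ X with λ(A) < ε such that w̄_k → 1_S uniformly on X \ A. -/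
open MeasureTheory Filter Topology
open scoped ENNReal

/-- The running minimum `w̄_k(x) = min_{i ≤ k} w_i(x)` of a sequence of functions. -/
noncomputable def runMin {α : Type*} (w : ℕ → α → ℝ) (k : ℕ) (x : α) : ℝ :=
  (Finset.range (k + 1)).inf' Finset.nonempty_range_add_one fun i => w i x

/-!
On `X` we have `1_S ≤ w_k`, so `∫_X |w_k - 1_S| = ∫_X w_k - λ(S) → 0`. The running minima
`w̄_k` decrease, stay above `1_S` and lie below `w_k`, hence `∫_X (w̄_k - 1_S) → 0`; the
infimum of `w̄_k - 1_S` then has zero integral, so `w̄_k → 1_S` almost everywhere on `X`, and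
Egorov's theorem on the finite-measure set `X` upgrades this to almost uniform convergence.
-/

section RunMin

variable {α : Type*} (w : ℕ → α → ℝ)

lemma runMin_eq_inf' (k : ℕ) :
    runMin w k = (Finset.range (k + 1)).inf' Finset.nonempty_range_add_one w :=
  funext fun x => (Finset.inf'_apply _ w x).symm

lemma measurable_runMin [MeasurableSpace α] (hw : ∀ k, Measurable (w k)) (k : ℕ) :
    Measurable (runMin w k) := by
  rw [runMin_eq_inf']
  exact Finset.inf'_induction _ w (fun _ hf _ hg => hf.inf hg) fun i _ => hw i

lemma runMin_le (k : ℕ) (x : α) : runMin w k x ≤ w k x :=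
  Finset.inf'_le _ (Finset.self_mem_range_succ k)

lemma antitone_runMin (x : α) : Antitone fun k => runMin w k x := fun _ _ h =>
  Finset.inf'_mono _ (Finset.range_subset_range.2 (Nat.succ_le_succ h)) _

variable {w}

lemma le_runMin {c : ℝ} {x : α} (h : ∀ i, c ≤ w i x) (k : ℕ) : c ≤ runMin w k x :=
  Finset.le_inf' _ _ fun i _ => h i

end RunMin

section LIntegral

variable {α : Type*} [MeasurableSpace α] {μ : Measure α}

lemma lintegral_ofReal_eq_lintegral_ofReal_sub_add {f g : α → ℝ} (hg : AEMeasurable g μ)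
    (hg0 : 0 ≤ᵐ[μ] g) (hgf : g ≤ᵐ[μ] f) :
    ∫⁻ x, ENNReal.ofReal (f x) ∂μ =
      ∫⁻ x, ENNReal.ofReal (f x - g x) ∂μ + ∫⁻ x, ENNReal.ofReal (g x) ∂μ := by
  rw [← lintegral_add_right' _ hg.ennreal_ofReal]
  refine lintegral_congr_ae ?_
  filter_upwards [hg0, hgf] with x hx0 hxf
  rw [← ENNReal.ofReal_add (sub_nonneg.2 hxf) hx0, sub_add_cancel]

lemma tendsto_lintegral_ofReal_abs_sub {f : ℕ → α → ℝ} {g : α → ℝ} (hg : AEMeasurable g μ)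
    (hg0 : 0 ≤ᵐ[μ] g) (hgf : ∀ k, g ≤ᵐ[μ] f k) (hg_fin : ∫⁻ x, ENNReal.ofReal (g x) ∂μ ≠ ∞)
    (hf : Tendsto (fun k => ∫⁻ x, ENNReal.ofReal (f k x) ∂μ) atTop
      (𝓝 (∫⁻ x, ENNReal.ofReal (g x) ∂μ))) :
    Tendsto (fun k => ∫⁻ x, ENNReal.ofReal |f k x - g x| ∂μ) atTop (𝓝 0) := by
  have hsplit : ∀ k, ∫⁻ x, ENNReal.ofReal |f k x - g x| ∂μ =
      ∫⁻ x, ENNReal.ofReal (f k x) ∂μ - ∫⁻ x, ENNReal.ofReal (g x) ∂μ := fun k => by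
    rw [lintegral_ofReal_eq_lintegral_ofReal_sub_add hg hg0 (hgf k),
      ENNReal.add_sub_cancel_right hg_fin]
    refine lintegral_congr_ae ?_
    filter_upwards [hgf k] with x hx
    rw [abs_of_nonneg (sub_nonneg.2 hx)]
  simpa only [hsplit, tsub_self] using ENNReal.Tendsto.sub hf tendsto_const_nhds (Or.inr hg_fin)

lemma ae_tendsto_of_antitone_of_tendsto_lintegral {f : ℕ → α → ℝ} {g : α → ℝ}
    (hf : ∀ k, AEMeasurable (f k) μ) (hg : AEMeasurable g μ)
    (hanti : ∀ᵐ x ∂μ, Antitone fun k => f k x) (hgf : ∀ᵐ x ∂μ, ∀ k, g x ≤ f k x)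
    (hlim : Tendsto (fun k => ∫⁻ x, ENNReal.ofReal (f k x - g x) ∂μ) atTop (𝓝 0)) :
    ∀ᵐ x ∂μ, Tendsto (fun k => f k x) atTop (𝓝 (g x)) := by
  set F : α → ℝ≥0∞ := fun x => ⨅ k, ENNReal.ofReal (f k x - g x)
  have hF_meas : AEMeasurable F μ :=
    AEMeasurable.iInf fun k => ((hf k).sub hg).ennreal_ofReal
  have hF_zero : ∫⁻ x, F x ∂μ = 0 :=
    le_antisymm (ge_of_tendsto' hlim fun k => lintegral_mono fun x => iInf_le _ k) zero_le
  filter_upwards [(lintegral_eq_zero_iff' hF_meas).1 hF_zero, hanti, hgf] with x hFx hx_anti hx_ge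
  have hbdd : BddBelow (Set.range fun k => f k x) := ⟨g x, Set.forall_mem_range.2 hx_ge⟩
  convert tendsto_atTop_ciInf hx_anti hbdd
  refine le_antisymm (le_ciInf hx_ge) (sub_nonpos.1 (ENNReal.ofReal_eq_zero.1 ?_))
  refine le_antisymm ?_ zero_le
  calc ENNReal.ofReal ((⨅ k, f k x) - g x) ≤ F x :=
        le_iInf fun k => ENNReal.ofReal_le_ofReal (sub_le_sub_right (ciInf_le hbdd k) _)
    _ = 0 := hFx

lemma setLIntegral_ofReal_indicator_one {s t : Set α} (hs : MeasurableSet s) (hst : s ⊆ t) :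
    ∫⁻ x in t, ENNReal.ofReal (s.indicator 1 x) ∂μ = μ s := by
  rw [← Measure.restrict_eq_self μ hst, ← lintegral_indicator_one hs]
  exact lintegral_congr fun x => by by_cases hx : x ∈ s <;> simp [hx]

end LIntegral

/-- If `w_k ≥ 0` on `X`, `w_k ≥ 1` on `S ⊆ X`, and `∫_X w_k dλ → λ(S)`, then `w_k → 1_S`
in `L¹(X, λ)` and the running minima `w̄_k` converge to `1_S` almost uniformly on `X`. -/
theorem dual_solutions_converge_to_indicator {n : ℕ}
    (X : Set (EuclideanSpace ℝ (Fin n))) (hX : IsCompact X)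
    (S : Set (EuclideanSpace ℝ (Fin n))) (hSX : S ⊆ X) (hS : MeasurableSet S)
    (w : ℕ → EuclideanSpace ℝ (Fin n) → ℝ)
    (hmeas : ∀ k, Measurable (w k))
    (hnonneg : ∀ k, ∀ x ∈ X, 0 ≤ w k x)
    (hge1 : ∀ k, ∀ x ∈ S, 1 ≤ w k x)
    (hconv : Tendsto (fun k => ∫⁻ x in X, ENNReal.ofReal (w k x)) atTop
      (𝓝 (volume S))) :
    Tendsto (fun k => ∫⁻ x in X, ENNReal.ofReal |w k x - S.indicator 1 x|) atTop (𝓝 0) ∧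
    ∀ ε : ℝ≥0∞, 0 < ε → ∃ A ⊆ X, MeasurableSet A ∧ volume A < ε ∧
      TendstoUniformlyOn (fun k => runMin w k) (S.indicator 1) atTop (X \ A) := by
  have hXm : MeasurableSet X := hX.measurableSet
  have h1S : Measurable (S.indicator (1 : EuclideanSpace ℝ (Fin n) → ℝ)) :=
    measurable_one.indicator hS
  have hS_le : ∀ x ∈ X, ∀ k, S.indicator 1 x ≤ w k x := fun x hx k =>
    Set.indicator_apply_le' (fun hxS => hge1 k x hxS) fun _ => hnonneg k x hx
  have hvol := setLIntegral_ofReal_indicator_one (μ := volume) hS hSX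
  have hL1 := tendsto_lintegral_ofReal_abs_sub h1S.aemeasurable
    (Eventually.of_forall fun x => Set.indicator_nonneg (fun _ _ => zero_le_one) x)
    (fun k => ae_restrict_of_forall_mem hXm fun x hx => hS_le x hx k)
    (hvol ▸ (measure_lt_top_of_subset hSX hX.measure_lt_top.ne).ne) (hvol ▸ hconv)
  refine ⟨hL1, fun ε hε => ?_⟩
  have hmin_L1 : Tendsto (fun k => ∫⁻ x in X, ENNReal.ofReal (runMin w k x - S.indicator 1 x))
      atTop (𝓝 0) :=
    tendsto_of_tendsto_of_tendsto_of_le_of_le tendsto_const_nhds hL1 (fun _ => zero_le) fun k =>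
      lintegral_mono fun x => ENNReal.ofReal_le_ofReal
        ((sub_le_sub_right (runMin_le w k x) _).trans (le_abs_self _))
  have hmin_ae := ae_tendsto_of_antitone_of_tendsto_lintegral
    (fun k => (measurable_runMin w hmeas k).aemeasurable) h1S.aemeasurable
    (Eventually.of_forall (antitone_runMin w))
    (ae_restrict_of_forall_mem hXm fun x hx => le_runMin (hS_le x hx)) hmin_L1
  obtain ⟨δ, -, hδpos, hδε⟩ := ENNReal.lt_iff_exists_real_btwn.1 hε
  obtain ⟨A, hAX, hAm, hAδ, hunif⟩ := tendstoUniformlyOn_of_ae_tendsto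
    (fun k => (measurable_runMin w hmeas k).stronglyMeasurable) h1S.stronglyMeasurable hXm
    hX.measure_lt_top.ne ((ae_restrict_iff' hXm).1 hmin_ae) (ENNReal.ofReal_pos.1 hδpos)
  exact ⟨A, hAX, hAm, hAδ.trans_lt hδε, hunif⟩
end

section
/- Let (v_k, w_k)_{k≥1} be feasible pairs for the discrete-time dual LP such that ∫_X w_k dλ → λ(X_I), and set X_{I,k} := {x ∈ X : v_k(x) ≥ 0}. Then X_I ⊆ X_{I,k} for every k, lim_{k→∞} λ(X_{I,k} \ X_I) = 0, and λ(⋂_{k≥1} X_{I,k} \ X_I) = 0. -/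
open MeasureTheory Filter Topology
open scoped ENNReal

/-!
Along an admissible trajectory starting at `x₀ ∈ X_I` the constraint `α v(f(x,u)) ≤ v(x)` gives
`v(x₀) ≥ αᵗ v(x_t) ≥ αᵗ min_X v → 0`, so `X_I ⊆ X_{I,k}`. Since `w_k ≥ 1` on `X_{I,k}` and
`w_k ≥ 0` on `X`, we have `λ(X_{I,k}) ≤ ∫_X w_k`, hence
`λ(X_{I,k} \ X_I) = λ(X_{I,k}) - λ(X_I) ≤ ∫_X w_k - λ(X_I) → 0`; the subtraction is legitimate
because `X_I`, the projection of a compact set of admissible trajectories, is compact.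
-/

section Trajectories

variable {α β : Type*}

def admissibleTrajectories (X : Set α) (U : Set β) (f : α → β → α) :
    Set ((ℕ → α) × (ℕ → β)) :=
  {p | (∀ t, p.1 (t + 1) = f (p.1 t) (p.2 t)) ∧ (∀ t, p.1 t ∈ X) ∧ ∀ t, p.2 t ∈ U}

variable [TopologicalSpace α] [TopologicalSpace β]

theorem isClosed_admissibleTrajectories [T2Space α] {X : Set α} {U : Set β}
    (hX : IsClosed X) (hU : IsClosed U) {f : α → β → α} (hf : Continuous (Function.uncurry f)) :
    IsClosed (admissibleTrajectories X U f) := by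
  simp only [admissibleTrajectories, Set.ofPred_and, Set.ofPred_forall]
  refine .inter (isClosed_iInter fun t => isClosed_eq (by fun_prop) ?_) <|
    .inter (isClosed_iInter fun t => hX.preimage ((continuous_apply t).comp continuous_fst))
      (isClosed_iInter fun t => hU.preimage ((continuous_apply t).comp continuous_snd))
  exact hf.comp (f := fun p : (ℕ → α) × (ℕ → β) => (p.1 t, p.2 t)) (by fun_prop)

theorem isCompact_admissibleTrajectories [T2Space α] [T2Space β] {X : Set α} {U : Set β}
    (hX : IsCompact X) (hU : IsCompact U) {f : α → β → α}
    (hf : Continuous (Function.uncurry f)) :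
    IsCompact (admissibleTrajectories X U f) :=
  ((isCompact_univ_pi fun _ => hX).prod (isCompact_univ_pi fun _ => hU)).of_isClosed_subset
    (isClosed_admissibleTrajectories hX.isClosed hU.isClosed hf)
    fun _ hp => ⟨fun t _ => hp.2.1 t, fun t _ => hp.2.2 t⟩

end Trajectories

theorem mciD_eq_image_admissibleTrajectories {n m : ℕ}
    (X : Set (EuclideanSpace ℝ (Fin n))) (U : Set (EuclideanSpace ℝ (Fin m)))
    (f : EuclideanSpace ℝ (Fin n) → EuclideanSpace ℝ (Fin m) → EuclideanSpace ℝ (Fin n)) :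
    mciD X U f = (fun p => p.1 0) '' admissibleTrajectories X U f := by
  ext x₀
  constructor
  · rintro ⟨x, u, rfl, hstep, hxX, huU⟩
    exact ⟨(x, u), ⟨hstep, hxX, huU⟩, rfl⟩
  · rintro ⟨⟨x, u⟩, ⟨hstep, hxX, huU⟩, rfl⟩
    exact ⟨x, u, rfl, hstep, hxX, huU⟩

theorem isCompact_mciD {n m : ℕ}
    {X : Set (EuclideanSpace ℝ (Fin n))} {U : Set (EuclideanSpace ℝ (Fin m))}
    (hX : IsCompact X) (hU : IsCompact U)
    {f : EuclideanSpace ℝ (Fin n) → EuclideanSpace ℝ (Fin m) → EuclideanSpace ℝ (Fin n)}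
    (hf : Continuous fun p : EuclideanSpace ℝ (Fin n) × EuclideanSpace ℝ (Fin m) => f p.1 p.2) :
    IsCompact (mciD X U f) := by
  rw [mciD_eq_image_admissibleTrajectories]
  exact (isCompact_admissibleTrajectories hX hU hf).image (by fun_prop)

theorem nonneg_of_bddBelow_of_discounted_le {α : ℝ} (hα0 : 0 ≤ α) (hα1 : α < 1) {v : ℕ → ℝ}
    (hv : BddBelow (Set.range v)) (hdec : ∀ t, α * v (t + 1) ≤ v t) : 0 ≤ v 0 := by
  obtain ⟨C, hC⟩ := hv
  have hdiscounted : ∀ t, α ^ t * v t ≤ v 0 := by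
    intro t
    induction t with
    | zero => simp
    | succ t ih =>
      calc α ^ (t + 1) * v (t + 1) = α ^ t * (α * v (t + 1)) := by ring
        _ ≤ α ^ t * v t := by gcongr; exact hdec t
        _ ≤ v 0 := ih
  have hlim : Tendsto (fun t : ℕ => α ^ t * C) atTop (𝓝 0) := by
    simpa using (tendsto_pow_atTop_nhds_zero_of_lt_one hα0 hα1).mul_const C
  exact le_of_tendsto' hlim fun t =>
    (mul_le_mul_of_nonneg_left (hC ⟨t, rfl⟩) (pow_nonneg hα0 t)).trans (hdiscounted t)

theorem mciD_subset_nonneg_of_dualFeasD {n m : ℕ}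
    {X : Set (EuclideanSpace ℝ (Fin n))} {U : Set (EuclideanSpace ℝ (Fin m))}
    (hX : IsCompact X)
    {f : EuclideanSpace ℝ (Fin n) → EuclideanSpace ℝ (Fin m) → EuclideanSpace ℝ (Fin n)}
    {α : ℝ} (hα0 : 0 ≤ α) (hα1 : α < 1) {v w : EuclideanSpace ℝ (Fin n) → ℝ}
    (hfeas : DualFeasD X U f α v w) :
    mciD X U f ⊆ {x ∈ X | 0 ≤ v x} := by
  rintro x₀ ⟨x, u, rfl, hstep, hxX, huU⟩
  obtain ⟨hv, -, hdec, -, -⟩ := hfeas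
  have hbdd : BddBelow (Set.range (v ∘ x)) :=
    (hX.bddBelow_image hv.continuousOn).mono
      (Set.range_subset_iff.2 fun t => Set.mem_image_of_mem v (hxX t))
  refine ⟨hxX 0, nonneg_of_bddBelow_of_discounted_le hα0 hα1 hbdd fun t => ?_⟩
  simpa only [Function.comp_apply, hstep t] using hdec (x t) (hxX t) (u t) (huU t)

theorem measureReal_le_setIntegral {γ : Type*} [MeasurableSpace γ] {μ : Measure γ}
    {X A : Set γ} {w : γ → ℝ} (hX : MeasurableSet X) (hAX : A ⊆ X) (hXfin : μ X ≠ ∞)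
    (hw : IntegrableOn w X μ) (hw0 : ∀ x ∈ X, 0 ≤ w x) (hw1 : ∀ x ∈ A, 1 ≤ w x) :
    μ.real A ≤ ∫ x in X, w x ∂μ := by
  have hmarkov := mul_meas_ge_le_integral_of_nonneg (ae_restrict_of_forall_mem hX hw0) hw 1
  rw [one_mul, measureReal_restrict_apply' hX] at hmarkov
  exact (measureReal_mono (Set.subset_inter hw1 hAX)
    (measure_ne_top_of_subset Set.inter_subset_right hXfin)).trans hmarkov

theorem measureReal_nonneg_le_integral_of_dualFeasD {n m : ℕ}
    {X : Set (EuclideanSpace ℝ (Fin n))} {U : Set (EuclideanSpace ℝ (Fin m))}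
    (hX : IsCompact X)
    {f : EuclideanSpace ℝ (Fin n) → EuclideanSpace ℝ (Fin m) → EuclideanSpace ℝ (Fin n)}
    {α : ℝ} {v w : EuclideanSpace ℝ (Fin n) → ℝ} (hfeas : DualFeasD X U f α v w) :
    volume.real {x ∈ X | 0 ≤ v x} ≤ ∫ x in X, w x :=
  have ⟨_, hw, _, hvw, hw0⟩ := hfeas
  measureReal_le_setIntegral hX.isClosed.measurableSet (fun _ hx => hx.1)
    hX.measure_lt_top.ne (hw.continuousOn.integrableOn_compact hX) hw0
    fun x hx => by linarith [hvw x hx.1, hx.2]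

section OuterApproximation

variable {γ : Type*} [MeasurableSpace γ] {μ : Measure γ} {I : Set γ} {A : ℕ → Set γ}

theorem tendsto_measure_sdiff_of_measureReal_le {c : ℕ → ℝ} (hI : MeasurableSet I)
    (hIA : ∀ k, I ⊆ A k) (hA : ∀ k, μ (A k) ≠ ∞) (hc : ∀ k, μ.real (A k) ≤ c k)
    (hlim : Tendsto c atTop (𝓝 (μ.real I))) :
    Tendsto (fun k => μ (A k \ I)) atTop (𝓝 0) := by
  have hreal : Tendsto (fun k => μ.real (A k \ I)) atTop (𝓝 0) := by
    refine tendsto_of_tendsto_of_tendsto_of_le_of_le tendsto_const_nhds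
      (by simpa using hlim.sub_const (μ.real I)) (fun _ => measureReal_nonneg) fun k => ?_
    rw [measureReal_sdiff (hIA k) hI (hA k)]
    linarith [hc k]
  rw [← ENNReal.tendsto_toReal_iff (fun k => measure_ne_top_of_subset Set.sdiff_subset (hA k))
    ENNReal.zero_ne_top, ENNReal.toReal_zero]
  exact hreal

theorem measure_iInter_sdiff_eq_zero (h : Tendsto (fun k => μ (A k \ I)) atTop (𝓝 0)) :
    μ ((⋂ k, A k) \ I) = 0 :=
  le_antisymm (ge_of_tendsto' h fun k =>
    measure_mono (Set.sdiff_subset_sdiff_left (Set.iInter_subset A k))) zero_le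

end OuterApproximation

/-- Set-wise convergence of the outer approximations `X_{I,k} = {x ∈ X : v_k(x) ≥ 0}`
to the MCI set. -/
theorem outer_approximations_converge_to_MCI {n m : ℕ}
    (X : Set (EuclideanSpace ℝ (Fin n))) (U : Set (EuclideanSpace ℝ (Fin m)))
    (hX : IsCompact X) (hU : IsCompact U)
    (f : EuclideanSpace ℝ (Fin n) → EuclideanSpace ℝ (Fin m) → EuclideanSpace ℝ (Fin n))
    (hf : Continuous fun p : EuclideanSpace ℝ (Fin n) × EuclideanSpace ℝ (Fin m) => f p.1 p.2)
    (α : ℝ) (hα0 : 0 < α) (hα1 : α < 1)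
    (v w : ℕ → EuclideanSpace ℝ (Fin n) → ℝ)
    (hfeas : ∀ k, DualFeasD X U f α (v k) (w k))
    (hconv : Tendsto (fun k => ∫ x in X, w k x ∂volume) atTop
      (𝓝 (volume (mciD X U f)).toReal)) :
    (∀ k, mciD X U f ⊆ {x ∈ X | 0 ≤ v k x}) ∧
    Tendsto (fun k => volume ({x ∈ X | 0 ≤ v k x} \ mciD X U f)) atTop (𝓝 0) ∧
    volume ((⋂ k, {x ∈ X | 0 ≤ v k x}) \ mciD X U f) = 0 := by
  have hsub : ∀ k, mciD X U f ⊆ {x ∈ X | 0 ≤ v k x} := fun k =>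
    mciD_subset_nonneg_of_dualFeasD hX hα0.le hα1 (hfeas k)
  have hlim : Tendsto (fun k => volume ({x ∈ X | 0 ≤ v k x} \ mciD X U f)) atTop (𝓝 0) :=
    tendsto_measure_sdiff_of_measureReal_le (isCompact_mciD hX hU hf).isClosed.measurableSet hsub
      (fun k => measure_ne_top_of_subset (fun _ hx => hx.1) hX.measure_lt_top.ne)
      (fun k => measureReal_nonneg_le_integral_of_dualFeasD hX (hfeas k)) hconv
  exact ⟨hsub, hlim, measure_iInter_sdiff_eq_zero hlim⟩
end
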